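/- arXiv:2602.23196 — 4 statements merged into one kernel-verified Lean document; each statement's English description precedes it below -/
import Mathlib

section
/- There exists a finite simple graph N that is triangle-free and admits a proper 3-coloring, together with two distinct non-adjacent vertices u and v of N, such that every proper 3-coloring c of N satisfies c(u) ≠ c(v). -/
/-!
Deleting an edge `pq` from a graph that is not `n`-colourable leaves a graph in which every
`n`-colouring gives `p` and `q` the same colour, so every other neighbour `r` of `q` is forced to
differ from `p`; if the graph is triangle-free, `r` and `p` are not adjacent.

We apply this to the Grötzsch graph, the Mycielskian of the 5-cycle, deleting a hub–shadow edge.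
A 3-colouring of a Mycielskian yields a 2-colouring of the underlying graph: give each vertex
coloured like the hub the colour of its shadow instead. As the 5-cycle is odd, the Grötzsch graph
is not 3-colourable. Once the edge from the hub to the shadow of a vertex `v` is deleted, it is
3-colourable: colour every vertex and its shadow like a 3-colouring of the 5-cycle in which the
colour of `v` is used nowhere else, and give the hub that colour.
-/

namespace SimpleGraph

variable {V : Type*} {G : SimpleGraph V}

/-- The Mycielskian of `G`: `some (false, x)` is the vertex `x` of `G`, `some (true, x)` is its
shadow, adjacent to the neighbours of `x`, and `none` is a hub adjacent to all shadows. -/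
def mycielskian (G : SimpleGraph V) : SimpleGraph (Option (Bool × V)) where
  Adj
    | some (a, x), some (b, y) => (a = false ∨ b = false) ∧ G.Adj x y
    | some (a, _), none => a = true
    | none, some (b, _) => b = true
    | none, none => False
  symm := ⟨by
    rintro (_ | ⟨a, x⟩) (_ | ⟨b, y⟩) h
    all_goals first | exact h | exact ⟨h.1.symm, h.2.symm⟩⟩
  loopless := ⟨by
    rintro (_ | ⟨a, x⟩) h
    exacts [h, G.loopless.irrefl x h.2]⟩

@[simp]
theorem mycielskian_adj_some_some {a b : Bool} {x y : V} :
    G.mycielskian.Adj (some (a, x)) (some (b, y)) ↔ (a = false ∨ b = false) ∧ G.Adj x y :=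
  Iff.rfl

@[simp]
theorem mycielskian_adj_some_none {a : Bool} {x : V} :
    G.mycielskian.Adj (some (a, x)) none ↔ a = true :=
  Iff.rfl

@[simp]
theorem mycielskian_adj_none_some {b : Bool} {y : V} :
    G.mycielskian.Adj none (some (b, y)) ↔ b = true :=
  Iff.rfl

@[simp]
theorem mycielskian_not_adj_none_none : ¬ G.mycielskian.Adj none none :=
  id

theorem Colorable.of_mycielskian {n : ℕ} (h : G.mycielskian.Colorable (n + 1)) :
    G.Colorable n := by
  obtain ⟨c⟩ := h
  have hshadow (x : V) : c (some (true, x)) ≠ c none := c.valid (by simp)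
  let c' : V → {k // k ≠ c none} := fun x =>
    if hx : c (some (false, x)) = c none then ⟨_, hshadow x⟩ else ⟨_, hx⟩
  have hc' : ∀ {x y}, G.Adj x y → c' x ≠ c' y := by
    intro x y hxy
    simp only [c', ne_eq]
    split_ifs with hx hy hy
    · exact absurd (hx.trans hy.symm) (c.valid (by simpa using hxy))
    all_goals simp only [Subtype.mk.injEq]; exact c.valid (by simpa using hxy)
  simpa [Fintype.card_subtype_compl] using (Coloring.mk c' hc').colorable

theorem CliqueFree.mycielskian (hG : G.CliqueFree 3) : G.mycielskian.CliqueFree 3 := by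
  classical
  intro s hs
  obtain ⟨p, q, r, hpq, hpr, hqr, rfl⟩ := is3Clique_iff.1 hs
  rcases p with _ | ⟨a, x⟩ <;> rcases q with _ | ⟨b, y⟩ <;> rcases r with _ | ⟨d, z⟩
  case some.some.some =>
    exact hG {x, y, z} (is3Clique_triple_iff.2 ⟨hpq.2, hpr.2, hqr.2⟩)
  all_goals simp_all

theorem Coloring.colorable_mycielskian_deleteEdges {n : ℕ} (c : G.Coloring (Fin n)) (v : V)
    (hv : ∀ x, c x = c v → x = v) :
    (G.mycielskian.deleteEdges {s(none, some (true, v))}).Colorable n := by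
  refine ⟨Coloring.mk (fun p => p.elim (c v) (c ∘ Prod.snd)) ?_⟩
  rintro (_ | ⟨a, x⟩) (_ | ⟨b, y⟩) h <;> rw [deleteEdges_adj] at h
  · exact absurd h.1 mycielskian_not_adj_none_none
  · obtain ⟨rfl : b = true, hyv⟩ := h
    have hy : y ≠ v := by rintro rfl; exact hyv rfl
    exact fun e => hy (hv y e.symm)
  · obtain ⟨rfl : a = true, hxv⟩ := h
    have hx : x ≠ v := by rintro rfl; exact hxv Sym2.eq_swap
    exact fun e => hx (hv x e)
  · exact c.valid h.1.2

theorem CliqueFree.not_adj_of_adj_of_adj (hG : G.CliqueFree 3) {p q r : V} (hpq : G.Adj p q)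
    (hrq : G.Adj r q) : ¬ G.Adj r p := by
  classical
  exact fun hrp => hG {r, p, q} (is3Clique_triple_iff.2 ⟨hrp, hrq, hpq⟩)

theorem Coloring.eq_of_not_colorable {n : ℕ} {p q : V} (hG : ¬ G.Colorable n)
    (c : (G.deleteEdges {s(p, q)}).Coloring (Fin n)) : c p = c q := by
  by_contra hpq
  refine hG ⟨Coloring.mk c fun {x y} hxy => ?_⟩
  by_cases he : s(x, y) = s(p, q)
  · rcases Sym2.eq_iff.1 he with ⟨rfl, rfl⟩ | ⟨rfl, rfl⟩
    exacts [hpq, Ne.symm hpq]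
  · exact c.valid (deleteEdges_adj.2 ⟨hxy, he⟩)

theorem Coloring.ne_of_not_colorable {n : ℕ} {p q r : V} (hG : ¬ G.Colorable n)
    (hrq : G.Adj r q) (hrp : r ≠ p) (c : (G.deleteEdges {s(p, q)}).Coloring (Fin n)) :
    c r ≠ c p := by
  rw [c.eq_of_not_colorable hG]
  exact c.valid (deleteEdges_adj.2 ⟨hrq, by simp [hrp, hrq.ne]⟩)

theorem cycleGraph_five_cliqueFree_three : (cycleGraph 5).CliqueFree 3 := by
  intro s hs
  obtain ⟨a, b, c, hab, hac, hbc, -⟩ := is3Clique_iff.1 hs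
  revert a b c
  decide

abbrev grotzschGraph : SimpleGraph (Option (Bool × Fin 5)) := (cycleGraph 5).mycielskian

theorem grotzschGraph_not_colorable_three : ¬ grotzschGraph.Colorable 3 := fun h => by
  have := h.of_mycielskian.chromaticNumber_le
  rw [chromaticNumber_cycleGraph_of_odd 5 (by norm_num) (by decide)] at this
  norm_num at this

end SimpleGraph

/-- **Inequality gadget.** There exists a finite simple graph `N` that is triangle-free
and admits a proper 3-coloring, together with two distinct non-adjacent vertices
`u` and `v`, such that every proper 3-coloring `c` of `N` satisfies `c u ≠ c v`. -/
theorem inequality_gadget_exists :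
    ∃ (W : Type) (_ : Fintype W) (N : SimpleGraph W) (u v : W),
      N.CliqueFree 3 ∧ N.Colorable 3 ∧ u ≠ v ∧ ¬ N.Adj u v ∧
      ∀ c : N.Coloring (Fin 3), c u ≠ c v := by
  let G := SimpleGraph.grotzschGraph
  have hG : G.CliqueFree 3 := SimpleGraph.cycleGraph_five_cliqueFree_three.mycielskian
  have hpq : G.Adj none (some (true, 4)) := rfl
  have hrq : G.Adj (some (false, 0)) (some (true, 4)) := ⟨.inl rfl, by decide⟩
  have hcol : (G.deleteEdges {s(none, some (true, 4))}).Colorable 3 :=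
    (SimpleGraph.cycleGraph.tricoloring 5 (by norm_num)).colorable_mycielskian_deleteEdges 4
      (by decide)
  refine ⟨_, inferInstance, G.deleteEdges {s(none, some (true, 4))}, some (false, 0), none,
    hG.anti (G.deleteEdges_le _), hcol, by simp,
    fun h => hG.not_adj_of_adj_of_adj hpq hrq (G.deleteEdges_le _ h), fun c => ?_⟩
  exact c.ne_of_not_colorable SimpleGraph.grotzschGraph_not_colorable_three hrq (by simp)
end

section
/- There exists a finite simple graph that is triangle-free and admits a proper 3-coloring, containing three pairwise distinct, pairwise non-adjacent vertices u, v, w such that every proper 3-coloring c of the graph assigns u, v, w three pairwise distinct colors, i.e., c(u), c(v), c(w) are all different. -/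
/-!
Take a triangle-free gadget `H` with two non-adjacent terminals such that every proper
3-colouring gives the terminals distinct colours (`inequalityGadget`: identifying its terminals
yields a graph that is not 3-colourable). Replacing every edge of a triangle `uvw` by copies
of `H` glued along their terminals gives the graph. A triangle in it cannot use two
terminals, since those are never adjacent, so it has an internal vertex of some copy and then
lies entirely in that copy. Every 3-colouring restricts to a 3-colouring of each copy, so `u`,
`v`, `w` get pairwise distinct colours; conversely a 3-colouring of `H` with distinct terminal
colours can be permuted to match any prescribed pair of colours on each copy.
-/

open Function Sum

namespace SimpleGraph

variable {V I α : Type*} {B : SimpleGraph V} {H : SimpleGraph (Fin 2 ⊕ I)}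

def Dart.gadgetEmbedding (d : B.Dart) : Fin 2 ⊕ I ↪ V ⊕ B.Dart × I :=
  (Embedding.embFinTwo d.adj.ne).sumMap (Embedding.sectR d I)

@[simp]
theorem Dart.gadgetEmbedding_inl (d : B.Dart) (t : Fin 2) :
    d.gadgetEmbedding (inl t : Fin 2 ⊕ I) = inl (Embedding.embFinTwo d.adj.ne t) :=
  rfl

@[simp]
theorem Dart.gadgetEmbedding_inr (d : B.Dart) (i : I) : d.gadgetEmbedding (inr i) = inr (d, i) :=
  rfl

variable (B H) in
/-- Vertices are those of `B` together with, for each dart `d` of `B`, a copy of the internal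
vertices of `H`; the terminals `inl 0`, `inl 1` of this copy are `d.fst`, `d.snd`. Every edge
of `B` thus carries two copies of `H`, one per orientation, and is itself not kept. -/
def replaceDarts : SimpleGraph (V ⊕ B.Dart × I) :=
  ⨆ d : B.Dart, H.map d.gadgetEmbedding

theorem replaceDarts_adj {x y : V ⊕ B.Dart × I} :
    (B.replaceDarts H).Adj x y ↔
      ∃ d : B.Dart, ∃ a b, H.Adj a b ∧ d.gadgetEmbedding a = x ∧ d.gadgetEmbedding b = y := by
  simp only [replaceDarts, iSup_adj, map_adj]

def Dart.gadgetHom (d : B.Dart) : H →g B.replaceDarts H :=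
  (Hom.ofLE (le_iSup (fun d : B.Dart => H.map d.gadgetEmbedding) d)).comp
    (Embedding.map _ H).toHom

theorem not_replaceDarts_adj_inl (hH : ∀ s t, ¬ H.Adj (inl s) (inl t)) (u v : V) :
    ¬ (B.replaceDarts H).Adj (inl u) (inl v) := by
  intro h
  obtain ⟨d, a | i, b | j, hab, ha, hb⟩ := replaceDarts_adj.1 h
  · exact hH a b hab
  all_goals simp at ha hb

theorem exists_of_replaceDarts_adj_inr {d : B.Dart} {i : I} {y : V ⊕ B.Dart × I}
    (h : (B.replaceDarts H).Adj (inr (d, i)) y) :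
    ∃ b, H.Adj (inr i) b ∧ d.gadgetEmbedding b = y := by
  obtain ⟨d', a | j, b, hab, ha, rfl⟩ := replaceDarts_adj.1 h
  · simp at ha
  · obtain ⟨rfl, rfl⟩ : d' = d ∧ j = i := by simpa using ha
    exact ⟨b, hab, rfl⟩

theorem replaceDarts_adj_gadgetEmbedding (hH : ∀ s t, ¬ H.Adj (inl s) (inl t)) {d : B.Dart}
    {a b : Fin 2 ⊕ I} :
    (B.replaceDarts H).Adj (d.gadgetEmbedding a) (d.gadgetEmbedding b) ↔ H.Adj a b := by
  refine ⟨fun h => ?_, fun h => d.gadgetHom.map_adj h⟩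
  have of_inr : ∀ {i : I} {c}, (B.replaceDarts H).Adj (inr (d, i)) (d.gadgetEmbedding c) →
      H.Adj (inr i) c := fun h => by
    obtain ⟨c', hc', hc⟩ := exists_of_replaceDarts_adj_inr h
    rwa [d.gadgetEmbedding.injective hc] at hc'
  rcases a with s | i
  · rcases b with t | j
    · exact absurd h (not_replaceDarts_adj_inl hH _ _)
    · exact (of_inr h.symm).symm
  · exact of_inr h

theorem replaceDarts_cliqueFree_three (hH3 : H.CliqueFree 3)
    (hH : ∀ s t, ¬ H.Adj (inl s) (inl t)) : (B.replaceDarts H).CliqueFree 3 := by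
  classical
  have no_triangle_at_inr : ∀ d i y z, (B.replaceDarts H).Adj (inr (d, i)) y →
      (B.replaceDarts H).Adj (inr (d, i)) z → (B.replaceDarts H).Adj y z → False := by
    intro d i y z hy hz hyz
    obtain ⟨b, hb, rfl⟩ := exists_of_replaceDarts_adj_inr hy
    obtain ⟨c, hc, rfl⟩ := exists_of_replaceDarts_adj_inr hz
    exact hH3 _ (is3Clique_triple_iff.2 ⟨hb, hc, (replaceDarts_adj_gadgetEmbedding hH).1 hyz⟩)
  intro s hs
  obtain ⟨x, y, z, hxy, hxz, hyz, -⟩ := is3Clique_iff.1 hs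
  rcases x with u | ⟨d, i⟩
  · rcases y with v | ⟨d, i⟩
    · rcases z with w | ⟨d, i⟩
      · exact not_replaceDarts_adj_inl hH u v hxy
      · exact no_triangle_at_inr d i _ _ hxz.symm hyz.symm hxy
    · exact no_triangle_at_inr d i _ _ hxy.symm hyz hxz
  · exact no_triangle_at_inr d i y z hxy hxz hyz

theorem Coloring.exists_comp_eq {W ι : Type*} [Finite ι] {G : SimpleGraph W} (f : G.Coloring α)
    {v : ι → W} (hf : Injective (f ∘ v)) {p : ι → α} (hp : Injective p) :
    ∃ g : G.Coloring α, g ∘ v = p := by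
  obtain ⟨σ, hσ⟩ := Equiv.Perm.exists_extending_pair (f ∘ v) p hf hp
  exact ⟨G.recolorOfEquiv σ f, funext fun i => by simpa using hσ i⟩

theorem nonempty_coloring_replaceDarts (cB : B.Coloring α) (f : H.Coloring α)
    (hf : Injective (f ∘ inl)) : Nonempty ((B.replaceDarts H).Coloring α) := by
  choose g hg using fun d : B.Dart =>
    f.exists_comp_eq hf (Embedding.embFinTwo (cB.valid d.adj)).injective
  let F : V ⊕ B.Dart × I → α := Sum.elim cB fun p => g p.1 (inr p.2)
  have hF : ∀ d a, F (d.gadgetEmbedding a) = g d a := by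
    rintro d (t | i)
    · fin_cases t
      exacts [(congrFun (hg d) 0).symm, (congrFun (hg d) 1).symm]
    · rfl
  refine ⟨Coloring.mk F fun h => ?_⟩
  obtain ⟨d, a, b, hab, rfl, rfl⟩ := replaceDarts_adj.1 h
  rw [hF, hF]
  exact (g d).valid hab

theorem Coloring.replaceDarts_apply_fst_ne_snd (hH : ∀ f : H.Coloring α, f (inl 0) ≠ f (inl 1))
    (c : (B.replaceDarts H).Coloring α) (d : B.Dart) : c (inl d.fst) ≠ c (inl d.snd) :=
  hH (c.comp d.gadgetHom)

end SimpleGraph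

open SimpleGraph

theorem Fin.eq_of_ne_of_ne_three {a b c d : Fin 3} (hab : a ≠ b) (hca : c ≠ a) (hcb : c ≠ b)
    (hda : d ≠ a) (hdb : d ≠ b) : c = d := by
  revert a b c d; decide

def inequalityGadgetEdges : Finset ((Fin 2 ⊕ Fin 7) × (Fin 2 ⊕ Fin 7)) :=
  {(inl 0, inr 1), (inl 0, inr 4), (inl 0, inr 5), (inl 1, inr 0), (inl 1, inr 2), (inr 0, inr 1),
    (inr 0, inr 4), (inr 0, inr 6), (inr 1, inr 2), (inr 2, inr 3), (inr 2, inr 5), (inr 3, inr 4),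
    (inr 3, inr 6), (inr 5, inr 6)}

def inequalityGadget : SimpleGraph (Fin 2 ⊕ Fin 7) :=
  fromRel fun a b => (a, b) ∈ inequalityGadgetEdges

instance : DecidableRel inequalityGadget.Adj := fun a b =>
  inferInstanceAs
    (Decidable (a ≠ b ∧ ((a, b) ∈ inequalityGadgetEdges ∨ (b, a) ∈ inequalityGadgetEdges)))

theorem inequalityGadget_cliqueFree : inequalityGadget.CliqueFree 3 := by
  intro s hs
  obtain ⟨a, b, c, hab, hac, hbc, -⟩ := is3Clique_iff.1 hs
  revert a b c
  decide

theorem inequalityGadget_not_adj_inl : ∀ s t, ¬ inequalityGadget.Adj (inl s) (inl t) := by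
  decide

def inequalityGadgetColoring : inequalityGadget.Coloring (Fin 3) :=
  Coloring.mk (Sum.elim ![0, 1] ![0, 1, 0, 1, 2, 1, 2]) (by decide)

theorem inequalityGadgetColoring_injective_inl : Injective (inequalityGadgetColoring ∘ inl) := by
  decide

theorem inequalityGadget_coloring_ne (c : inequalityGadget.Coloring (Fin 3)) :
    c (inl 0) ≠ c (inl 1) := by
  have hne : ∀ {a b}, inequalityGadget.Adj a b → c a ≠ c b := c.valid
  -- If the terminals share the colour `x`, the colours of `inr 0, …, inr 6` are forced in turn.
  intro hst
  set x := c (inl 0)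
  have h0x : c (inr 0) ≠ x := hst ▸ hne (by decide)
  have h1x : c (inr 1) ≠ x := hne (by decide)
  have h2x : c (inr 2) ≠ x := hst ▸ hne (by decide)
  have h01 : c (inr 0) ≠ c (inr 1) := hne (by decide)
  have h2 : c (inr 2) = c (inr 0) :=
    Fin.eq_of_ne_of_ne_three h1x.symm h2x (hne (by decide)) h0x h01
  have h4 : c (inr 4) = c (inr 1) :=
    Fin.eq_of_ne_of_ne_three h0x.symm (hne (by decide)) (hne (by decide)) h1x h01.symm
  have h5 : c (inr 5) = c (inr 1) :=
    Fin.eq_of_ne_of_ne_three h0x.symm (hne (by decide)) (h2 ▸ hne (by decide)) h1x h01.symm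
  have h3 : c (inr 3) = x :=
    Fin.eq_of_ne_of_ne_three h01 (h2 ▸ hne (by decide)) (h4 ▸ hne (by decide)) h0x.symm h1x.symm
  have h6 : c (inr 6) = x :=
    Fin.eq_of_ne_of_ne_three h01 (hne (by decide)) (h5 ▸ hne (by decide)) h0x.symm h1x.symm
  exact hne (by decide : inequalityGadget.Adj (inr 3) (inr 6)) (h3.trans h6.symm)

/-- **The core of the gadget `X`.** There exists a finite simple graph that is
triangle-free and admits a proper 3-coloring, containing three pairwise distinct,
pairwise non-adjacent vertices `u, v, w` such that every proper 3-coloring assigns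
them three pairwise distinct colors. -/
theorem core_gadget_exists :
    ∃ (W : Type) (_ : Fintype W) (G : SimpleGraph W) (u v w : W),
      G.CliqueFree 3 ∧ G.Colorable 3 ∧
      u ≠ v ∧ v ≠ w ∧ u ≠ w ∧
      ¬ G.Adj u v ∧ ¬ G.Adj v w ∧ ¬ G.Adj u w ∧
      ∀ c : G.Coloring (Fin 3), c u ≠ c v ∧ c v ≠ c w ∧ c u ≠ c w := by
  have not_adj :=
    not_replaceDarts_adj_inl (B := (⊤ : SimpleGraph (Fin 3))) inequalityGadget_not_adj_inl
  have forced :=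
    Coloring.replaceDarts_apply_fst_ne_snd (B := (⊤ : SimpleGraph (Fin 3)))
      inequalityGadget_coloring_ne
  refine ⟨_, inferInstance, (⊤ : SimpleGraph (Fin 3)).replaceDarts inequalityGadget,
    inl 0, inl 1, inl 2,
    replaceDarts_cliqueFree_three inequalityGadget_cliqueFree inequalityGadget_not_adj_inl,
    nonempty_coloring_replaceDarts (selfColoring ⊤) inequalityGadgetColoring
      inequalityGadgetColoring_injective_inl,
    by simp, by simp, by simp, not_adj _ _, not_adj _ _, not_adj _ _,
    fun c => ⟨forced c ⟨(0, 1), by decide⟩, forced c ⟨(1, 2), by decide⟩,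
      forced c ⟨(0, 2), by decide⟩⟩⟩
end

section
/- Let P₆ denote the path graph on 6 vertices, and let P₆⁺ be its augmented pattern (a graph on 26 vertices). Then P₆⁺ admits a degenerate proper 3-coloring; that is, there is a proper 3-coloring c of P₆⁺ such that for every nonempty set S of vertices of P₆⁺ whose induced subgraph is not a triangle, there exists a vertex v ∈ S all of whose neighbors inside S receive the same color under c (vacuously so if v has no neighbors in S). -/
/-!
Colour the path `0, 1, 0, 1, 2, 0` and give the new vertices over a non-edge `{u, v}` a colour
avoiding those of `u` and `v`. A set `S` contains a vertex whose neighbours in `S` are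
monochromatic as soon as some ranking of the vertices makes the higher-ranked neighbours of every
vertex monochromatic: take the lowest-ranked vertex of `S`. Rank first the new vertices over
non-edges with equally coloured ends, then the path vertices in the order `2, 3, 0, 4, 1, 5`, each
followed by the remaining new vertices it is the earlier end of, so that those have at most one
higher-ranked neighbour. For a path vertex `u`, the later vertices of colour other than that of
`u` are adjacent to `u` exactly when they have one colour `k`; the new vertex over `u` and a later
non-adjacent `v` then gets the third colour besides those of `u` and `v`, which is again `k`.
-/

open SimpleGraph

/-- Vertex type of the augmented pattern `H⁺`: the vertices of `H` together with two new
vertices `(s, false)` and `(s, true)` for every non-edge `s = {u,v}` of `H`. -/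
abbrev AugVert {V : Type*} (H : SimpleGraph V) : Type _ :=
  V ⊕ ({s : Sym2 V // ¬ s.IsDiag ∧ s ∉ H.edgeSet} × Bool)

/-- The augmented pattern `H⁺`: all edges of `H`, together with, for each non-edge
`{u,v}` of `H`, the four edges joining `u` and `v` to the two new vertices
`(⟨{u,v},_⟩, false)` and `(⟨{u,v},_⟩, true)`. -/
def augment {V : Type*} (H : SimpleGraph V) : SimpleGraph (AugVert H) :=
  SimpleGraph.fromRel (fun x y =>
    match x, y with
    | Sum.inl a, Sum.inl b => H.Adj a b
    | Sum.inl a, Sum.inr p => a ∈ p.1.1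
    | _, _ => False)

theorem SimpleGraph.exists_mem_forall_adj_eq_of_rank {V α β : Type*} [LinearOrder β]
    {G : SimpleGraph V} (c : V → α) (r : V → β)
    (h : ∀ v w₁ w₂, G.Adj v w₁ → G.Adj v w₂ → r v ≤ r w₁ → r v ≤ r w₂ → c w₁ = c w₂)
    {S : Finset V} (hS : S.Nonempty) :
    ∃ v ∈ S, ∀ w₁ ∈ S, ∀ w₂ ∈ S, G.Adj v w₁ → G.Adj v w₂ → c w₁ = c w₂ := by
  obtain ⟨v, hv, hmin⟩ := S.exists_min_image r hS
  exact ⟨v, hv, fun w₁ h₁ w₂ h₂ a₁ a₂ => h v w₁ w₂ a₁ a₂ (hmin w₁ h₁) (hmin w₂ h₂)⟩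

-- As `0 + 1 + 2 = 0` in `Fin 3`, `-(a + b)` is the colour other than `a ≠ b`.
def thirdColor (a b : Fin 3) : Fin 3 := if a = b then a + 1 else -(a + b)

theorem thirdColor_comm (a b : Fin 3) : thirdColor a b = thirdColor b a := by
  revert a b; decide

theorem thirdColor_ne_left (a b : Fin 3) : thirdColor a b ≠ a := by
  revert a b; decide

theorem thirdColor_eq_of_ne {a b k : Fin 3} (hab : a ≠ b) (hka : k ≠ a) (hkb : k ≠ b) :
    thirdColor a b = k := by
  revert a b k; decide

section

variable {V : Type*} {H : SimpleGraph V}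

@[simp]
theorem augment_adj_inl_inl {u v : V} : (augment H).Adj (.inl u) (.inl v) ↔ H.Adj u v := by
  simp only [augment, fromRel_adj, ne_eq, Sum.inl.injEq]
  exact ⟨fun h => h.2.elim id H.adj_symm, fun h => ⟨H.ne_of_adj h, .inl h⟩⟩

@[simp]
theorem augment_adj_inl_inr {u : V} {p : {s : Sym2 V // ¬ s.IsDiag ∧ s ∉ H.edgeSet} × Bool} :
    (augment H).Adj (.inl u) (.inr p) ↔ u ∈ p.1.1 := by
  simp [augment]

theorem augment_adj_inr_iff {p : {s : Sym2 V // ¬ s.IsDiag ∧ s ∉ H.edgeSet} × Bool}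
    {w : AugVert H} : (augment H).Adj (.inr p) w ↔ ∃ u ∈ p.1.1, w = .inl u := by
  rcases w with u | q <;> simp [augment]

def augmentColor (b : V → Fin 3) : AugVert H → Fin 3
  | .inl u => b u
  | .inr p => Sym2.lift ⟨fun u v => thirdColor (b u) (b v), fun _ _ => thirdColor_comm _ _⟩ p.1.1

def augmentColoring (b : H.Coloring (Fin 3)) : (augment H).Coloring (Fin 3) :=
  Coloring.mk (augmentColor b) <| by
    have hnew : ∀ p w, (augment H).Adj (.inr p) w →
        augmentColor b (.inr p) ≠ augmentColor b w := by
      rintro ⟨⟨s, _⟩, _⟩ _ hadj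
      obtain ⟨u, hu, rfl⟩ := augment_adj_inr_iff.mp hadj
      obtain ⟨v, rfl⟩ := Sym2.mem_iff_exists.mp hu
      exact thirdColor_ne_left _ _
    rintro (u | p) (v | q) hadj
    · exact b.valid (augment_adj_inl_inl.mp hadj)
    · exact (hnew q _ hadj.symm).symm
    all_goals exact hnew p _ hadj

def augmentRank (b : V → Fin 3) (σ : V → ℕ) : AugVert H → ℕ
  | .inl u => 2 * σ u + 1
  | .inr p => Sym2.lift ⟨fun u v => if b u = b v then 0 else 2 * min (σ u) (σ v) + 2,
      fun u v => by simp only [@eq_comm _ (b v), min_comm]⟩ p.1.1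

def SimpleGraph.Coloring.IsSplitOrder (b : H.Coloring (Fin 3)) (σ : V → ℕ) : Prop :=
  ∀ u, ∃ k ≠ b u, ∀ w, σ u ≤ σ w → b w ≠ b u → (H.Adj u w ↔ b w = k)

theorem augmentColor_eq_of_adj_inr (b : V → Fin 3) (σ : V → ℕ)
    (p : {s : Sym2 V // ¬ s.IsDiag ∧ s ∉ H.edgeSet} × Bool) {w₁ w₂ : AugVert H}
    (h₁ : (augment H).Adj (.inr p) w₁) (h₂ : (augment H).Adj (.inr p) w₂)
    (hr₁ : augmentRank b σ (.inr p) ≤ augmentRank b σ w₁)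
    (hr₂ : augmentRank b σ (.inr p) ≤ augmentRank b σ w₂) :
    augmentColor b w₁ = augmentColor b w₂ := by
  obtain ⟨⟨s, _⟩, _⟩ := p
  obtain ⟨x, hx, rfl⟩ := augment_adj_inr_iff.mp h₁
  obtain ⟨y, hy, rfl⟩ := augment_adj_inr_iff.mp h₂
  obtain rfl | hxy := eq_or_ne x y
  · rfl
  obtain rfl := (Sym2.mem_and_mem_iff hxy).mp ⟨hx, hy⟩
  simp only [augmentRank, Sym2.lift_mk] at hr₁ hr₂
  simp only [augmentColor]
  split_ifs at hr₁ hr₂ with hb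
  · exact hb
  -- both ends would lie strictly above the earlier one
  · omega

theorem augmentColor_eq_of_adj_inl (b : H.Coloring (Fin 3)) (σ : V → ℕ) {u : V} {k : Fin 3}
    (hk : k ≠ b u) (hu : ∀ w, σ u ≤ σ w → b w ≠ b u → (H.Adj u w ↔ b w = k))
    {w : AugVert H} (hw : (augment H).Adj (.inl u) w)
    (hr : augmentRank b σ (.inl u : AugVert H) ≤ augmentRank b σ w) :
    augmentColor b w = k := by
  rcases w with w | ⟨⟨s, _, hnonadj⟩, _⟩
  · rw [augment_adj_inl_inl] at hw
    simp only [augmentRank] at hr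
    exact (hu w (by omega) (b.valid hw).symm).mp hw
  · obtain ⟨w, rfl⟩ := Sym2.mem_iff_exists.mp (augment_adj_inl_inr.mp hw)
    simp only [augmentRank, Sym2.lift_mk] at hr
    split_ifs at hr with hb
    · omega
    have hσ : σ u ≤ σ w := by omega
    have hkw : b w ≠ k := fun h => hnonadj ((hu w hσ (Ne.symm hb)).mpr h)
    exact thirdColor_eq_of_ne hb hk hkw.symm

theorem augment_exists_degenerate_coloring (b : H.Coloring (Fin 3)) {σ : V → ℕ}
    (hσ : b.IsSplitOrder σ) :
    ∃ c : (augment H).Coloring (Fin 3), ∀ S : Finset (AugVert H), S.Nonempty →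
      ∃ v ∈ S, ∀ w₁ ∈ S, ∀ w₂ ∈ S,
        (augment H).Adj v w₁ → (augment H).Adj v w₂ → c w₁ = c w₂ := by
  refine ⟨augmentColoring b, fun S hS =>
    exists_mem_forall_adj_eq_of_rank _ (augmentRank b σ) ?_ hS⟩
  rintro (u | p) w₁ w₂ h₁ h₂ hr₁ hr₂
  · obtain ⟨k, hk, hu⟩ := hσ u
    exact (augmentColor_eq_of_adj_inl b σ hk hu h₁ hr₁).trans
      (augmentColor_eq_of_adj_inl b σ hk hu h₂ hr₂).symm
  · exact augmentColor_eq_of_adj_inr b σ p h₁ h₂ hr₁ hr₂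

end

def pathSixColoring : (pathGraph 6).Coloring (Fin 3) :=
  Coloring.mk ![0, 1, 0, 1, 2, 0] <| by
    intro u v huv
    rw [pathGraph_adj] at huv
    revert u v
    decide

-- `σ` gives each vertex its position in the order `2, 3, 0, 4, 1, 5`.
theorem pathSixColoring_isSplitOrder : pathSixColoring.IsSplitOrder ![2, 4, 0, 1, 3, 5] := by
  unfold Coloring.IsSplitOrder
  simp only [pathGraph_adj]
  decide

/-- The augmented pattern `P₆⁺` of the path on 6 vertices admits a degenerate proper
3-coloring: a proper 3-coloring `c` such that every nonempty vertex set `S` whose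
induced subgraph is not a triangle contains a vertex all of whose neighbors inside `S`
get the same color under `c`. -/
theorem augmentP6_degenerately_colorable :
    ∃ c : (augment (SimpleGraph.pathGraph 6)).Coloring (Fin 3),
      ∀ S : Finset (AugVert (SimpleGraph.pathGraph 6)), S.Nonempty →
        ¬ (augment (SimpleGraph.pathGraph 6)).IsNClique 3 S →
        ∃ v ∈ S, ∀ w₁ ∈ S, ∀ w₂ ∈ S,
          (augment (SimpleGraph.pathGraph 6)).Adj v w₁ →
          (augment (SimpleGraph.pathGraph 6)).Adj v w₂ → c w₁ = c w₂ := by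
  obtain ⟨c, hc⟩ := augment_exists_degenerate_coloring _ pathSixColoring_isSplitOrder
  exact ⟨c, fun S hS _ => hc S hS⟩
end

section
/- Let C₇ denote the cycle graph on 7 vertices, and let C₇⁺ be its augmented pattern (a graph on 35 vertices). Then C₇⁺ admits a degenerate proper 3-coloring; that is, there is a proper 3-coloring c of C₇⁺ such that for every nonempty set S of vertices of C₇⁺ whose induced subgraph is not a triangle, there exists a vertex v ∈ S all of whose neighbors inside S receive the same color under c (vacuously so if v has no neighbors in S). -/
/-!
Color `C₇` by `0, 1, 0, 2, 0, 2, 1` and each new vertex over `{u, v}` by the least color other than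
those of `u` and `v`. In a vertex set `S`, a new vertex whose ends have equal colors, or which has
at most one end in `S`, has a monochromatic neighborhood. Otherwise take the old vertex `v ∈ S`
that comes first in a suitable order of `C₇`: its neighbors in `S` are its later neighbors `w` in
`C₇` and the new vertices over its later non-neighbors `w` of another color, and for this order
their colors (`c w`, resp. the third color besides `c v` and `c w`) all coincide.
-/

open SimpleGraph

def freeColor (a b : Fin 3) : Fin 3 :=
  if a ≠ 0 ∧ b ≠ 0 then 0 else if a ≠ 1 ∧ b ≠ 1 then 1 else 2

theorem freeColor_ne_left (a b : Fin 3) : freeColor a b ≠ a := by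
  revert a b; decide

theorem freeColor_ne_right (a b : Fin 3) : freeColor a b ≠ b := by
  revert a b; decide

theorem freeColor_comm (a b : Fin 3) : freeColor a b = freeColor b a := by
  revert a b; decide

namespace SimpleGraph

variable {V : Type*} {H : SimpleGraph V}

@[simp]
theorem augment_adj_inl_inl {a b : V} :
    (augment H).Adj (.inl a) (.inl b) ↔ H.Adj a b := by
  simp only [augment, fromRel_adj, ne_eq, Sum.inl.injEq]
  exact ⟨fun h => h.2.elim id fun h => h.symm, fun h => ⟨h.ne, .inl h⟩⟩

@[simp]
theorem augment_adj_inl_inr {a : V} {p : {s : Sym2 V // ¬ s.IsDiag ∧ s ∉ H.edgeSet} × Bool} :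
    (augment H).Adj (.inl a) (.inr p) ↔ a ∈ p.1.1 := by
  simp [augment, fromRel_adj]

@[simp]
theorem augment_adj_inr_inl {a : V} {p : {s : Sym2 V // ¬ s.IsDiag ∧ s ∉ H.edgeSet} × Bool} :
    (augment H).Adj (.inr p) (.inl a) ↔ a ∈ p.1.1 := by
  simp [augment, fromRel_adj]

@[simp]
theorem not_augment_adj_inr_inr {p q : {s : Sym2 V // ¬ s.IsDiag ∧ s ∉ H.edgeSet} × Bool} :
    ¬ (augment H).Adj (.inr p) (.inr q) := by
  simp [augment, fromRel_adj]

def Coloring.toAugment (c : H.Coloring (Fin 3)) : (augment H).Coloring (Fin 3) :=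
  Coloring.mk
    (fun
      | .inl v => c v
      | .inr p => p.1.1.lift ⟨fun u v => freeColor (c u) (c v), fun _ _ => freeColor_comm _ _⟩)
    (by
      rintro (a | ⟨⟨s, _⟩, _⟩) (b | ⟨⟨t, _⟩, _⟩) hab
      · exact c.valid (augment_adj_inl_inl.mp hab)
      · induction t using Sym2.ind
        rcases Sym2.mem_iff.mp (augment_adj_inl_inr.mp hab) with rfl | rfl
        exacts [(freeColor_ne_left _ _).symm, (freeColor_ne_right _ _).symm]
      · induction s using Sym2.ind
        rcases Sym2.mem_iff.mp (augment_adj_inr_inl.mp hab) with rfl | rfl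
        exacts [freeColor_ne_left _ _, freeColor_ne_right _ _]
      · exact absurd hab not_augment_adj_inr_inr)

theorem Coloring.toAugment_inr_of_eq (c : H.Coloring (Fin 3))
    {p : {s : Sym2 V // ¬ s.IsDiag ∧ s ∉ H.edgeSet} × Bool} {u w : V} (hp : p.1.1 = s(u, w)) :
    c.toAugment (.inr p) = freeColor (c u) (c w) := by
  change Sym2.lift _ p.1.1 = _
  rw [hp]
  rfl

def HasMonochromaticNeighborsIn {W α : Type*} (G : SimpleGraph W) (f : W → α) (S : Finset W)
    (v : W) : Prop :=
  ∀ w₁ ∈ S, ∀ w₂ ∈ S, G.Adj v w₁ → G.Adj v w₂ → f w₁ = f w₂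

theorem Coloring.toAugment_hasMonochromaticNeighborsIn_inr (c : H.Coloring (Fin 3))
    {S : Finset (AugVert H)} {p : {s : Sym2 V // ¬ s.IsDiag ∧ s ∉ H.edgeSet} × Bool} {u w : V}
    (hp : p.1.1 = s(u, w)) (h : c u = c w ∨ .inl w ∉ S) :
    (augment H).HasMonochromaticNeighborsIn c.toAugment S (.inr p) := by
  have hcol : ∀ y ∈ S, (augment H).Adj (.inr p) y → c.toAugment y = c u := by
    rintro (a | q) hy hadj
    · rw [augment_adj_inr_inl, hp, Sym2.mem_iff] at hadj
      rcases hadj with rfl | rfl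
      · rfl
      · exact (h.resolve_right (not_not.mpr hy)).symm
    · exact absurd hadj not_augment_adj_inr_inr
  exact fun y₁ hy₁ y₂ hy₂ h₁ h₂ => (hcol y₁ hy₁ h₁).trans (hcol y₂ hy₂ h₂).symm

def Coloring.IsAugmentPeelingOrder {β : Type*} [LE β] (c : H.Coloring (Fin 3)) (r : V → β) :
    Prop :=
  ∀ v, ∃ t, ∀ w, r v ≤ r w → c w ≠ c v →
    (H.Adj v w → c w = t) ∧ (¬ H.Adj v w → freeColor (c v) (c w) = t)

theorem Coloring.exists_toAugment_hasMonochromaticNeighborsIn {β : Type*} [LinearOrder β]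
    (c : H.Coloring (Fin 3)) {r : V → β} (hr : c.IsAugmentPeelingOrder r)
    {S : Finset (AugVert H)} (hS : S.Nonempty) :
    ∃ x ∈ S, (augment H).HasMonochromaticNeighborsIn c.toAugment S x := by
  by_contra! hmono
  have hnew : ∀ p, .inr p ∈ S → ∀ v ∈ p.1.1, ∃ w, p.1.1 = s(v, w) ∧ .inl w ∈ S ∧ c w ≠ c v := by
    intro p hp v hv
    obtain ⟨w, hvw⟩ := Sym2.mem_iff_exists.mp hv
    by_contra! hw
    refine hmono _ hp (c.toAugment_hasMonochromaticNeighborsIn_inr hvw ?_)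
    by_cases hwS : .inl w ∈ S
    exacts [.inl (hw w hvw hwS).symm, .inr hwS]
  have hold : S.toLeft.Nonempty := by
    obtain ⟨v | p, hx⟩ := hS
    · exact ⟨v, Finset.mem_toLeft.mpr hx⟩
    · obtain ⟨w, -, hw, -⟩ := hnew p hx _ (Sym2.out_fst_mem p.1.1)
      exact ⟨w, Finset.mem_toLeft.mpr hw⟩
  obtain ⟨v, hv, hmin⟩ := S.toLeft.exists_min_image r hold
  obtain ⟨t, ht⟩ := hr v
  have hcol : ∀ y ∈ S, (augment H).Adj (.inl v) y → c.toAugment y = t := by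
    rintro (w | p) hy hadj
    · rw [augment_adj_inl_inl] at hadj
      exact (ht w (hmin w (Finset.mem_toLeft.mpr hy)) (c.valid hadj).symm).1 hadj
    · obtain ⟨w, hvw, hw, hcw⟩ := hnew p hy v (augment_adj_inl_inr.mp hadj)
      have hnadj : ¬ H.Adj v w := fun h => p.1.2.2 (hvw ▸ h)
      rw [c.toAugment_inr_of_eq hvw]
      exact (ht w (hmin w (Finset.mem_toLeft.mpr hw)) hcw).2 hnadj
  exact hmono _ (Finset.mem_toLeft.mp hv)
    fun y₁ hy₁ y₂ hy₂ h₁ h₂ => (hcol y₁ hy₁ h₁).trans (hcol y₂ hy₂ h₂).symm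

end SimpleGraph

open SimpleGraph

def cycleSevenColoring : (cycleGraph 7).Coloring (Fin 3) :=
  Coloring.mk ![0, 1, 0, 2, 0, 2, 1] (by decide)

-- Found by exhaustive search; Mathlib's `cycleGraph.tricoloring` admits no such order.
theorem cycleSevenColoring_isAugmentPeelingOrder :
    cycleSevenColoring.IsAugmentPeelingOrder (![0, 1, 3, 1, 0, 2, 2] : Fin 7 → ℕ) := by
  unfold Coloring.IsAugmentPeelingOrder
  decide

/-- The augmented pattern `C₇⁺` of the cycle on 7 vertices admits a degenerate proper
3-coloring: a proper 3-coloring `c` such that every nonempty vertex set `S` whose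
induced subgraph is not a triangle contains a vertex all of whose neighbors inside `S`
get the same color under `c`. -/
theorem augmentC7_degenerately_colorable :
    ∃ c : (augment (SimpleGraph.cycleGraph 7)).Coloring (Fin 3),
      ∀ S : Finset (AugVert (SimpleGraph.cycleGraph 7)), S.Nonempty →
        ¬ (augment (SimpleGraph.cycleGraph 7)).IsNClique 3 S →
        ∃ v ∈ S, ∀ w₁ ∈ S, ∀ w₂ ∈ S,
          (augment (SimpleGraph.cycleGraph 7)).Adj v w₁ →
          (augment (SimpleGraph.cycleGraph 7)).Adj v w₂ → c w₁ = c w₂ :=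
  ⟨cycleSevenColoring.toAugment, fun _ hS _ =>
    cycleSevenColoring.exists_toAugment_hasMonochromaticNeighborsIn
      cycleSevenColoring_isAugmentPeelingOrder hS⟩
end
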